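/- Let (V, d) be a metric space, ε > 0, let L ⊆ V be a nonempty ε-sample of V (in particular, any ε-net), and let α ≥ 2ε. If x, y ∈ L are such that there exists a witness w ∈ V with d(w, x) ≤ infDist w L + α and d(w, y) ≤ infDist w L + α, then d(x, y) ≤ 3α. (This is the inclusion LW_α(V, L, 1) ⊆ R_{3α}(L) of Theorem 2, expressed at the level of edges.) -/

import Mathlib

theorem Metric.infDist_le_of_exists_dist_le {α : Type*} [PseudoMetricSpace α] {s : Set α}
    {x : α} {r : ℝ} (h : ∃ u ∈ s, dist x u ≤ r) : Metric.infDist x s ≤ r := by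
  obtain ⟨u, hu, hxu⟩ := h
  exact (Metric.infDist_le_dist_of_mem hu).trans hxu

theorem lazyWitness_edge_subset_rips_edge_general {V : Type*} [MetricSpace V] (ε : ℝ)
    (L : Set V)
    (hsample : ∀ v : V, ∃ u ∈ L, dist v u ≤ ε)
    (α : ℝ) (hα : 2 * ε ≤ α)
    (x y : V)
    (hwitness : ∃ w : V, dist w x ≤ Metric.infDist w L + α ∧
      dist w y ≤ Metric.infDist w L + α) :
    dist x y ≤ 3 * α := by
  obtain ⟨w, hwx, hwy⟩ := hwitness
  have hw : Metric.infDist w L ≤ ε := Metric.infDist_le_of_exists_dist_le (hsample w)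
  linarith [dist_triangle_left x y w]

/-- Theorem 2, second inclusion `LW_α(V, L, 1) ⊆ R_{3α}(L)`, at the level of edges:
if `L` is a nonempty `ε`-sample (in particular any `ε`-net), `α ≥ 2ε`, and `x, y ∈ L`
admit a witness `w ∈ V` with `d(w, x) ≤ d¹(w) + α` and `d(w, y) ≤ d¹(w) + α`
(with `d¹(w) = infDist w L`), then `d(x, y) ≤ 3α`. -/
theorem lazyWitness_edge_subset_rips_edge {V : Type*} [MetricSpace V] (ε : ℝ) (hε : 0 < ε)
    (L : Set V) (hne : L.Nonempty)
    (hsample : ∀ v : V, ∃ u ∈ L, dist v u ≤ ε)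
    (α : ℝ) (hα : 2 * ε ≤ α)
    (x y : V) (hx : x ∈ L) (hy : y ∈ L)
    (hwitness : ∃ w : V, dist w x ≤ Metric.infDist w L + α ∧
      dist w y ≤ Metric.infDist w L + α) :
    dist x y ≤ 3 * α :=
  lazyWitness_edge_subset_rips_edge_general ε L hsample α hα x y hwitness
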